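/- Any optimal solution to a depot variant of the many-visits multiple TSP can be transformed, without increasing cost, into an optimal solution that visits each depot at most once (i.e., each depot has degree at most 2 in the solution multigraph). -/

import Mathlib

open Finset

noncomputable section

variable {V : Type*}

/-- Degree of `v` in a multigraph given by a multiset of (possibly diagonal) `Sym2` edges;
self-loops count twice. -/
def mdeg [DecidableEq V] (E : Multiset (Sym2 V)) (v : V) : ℕ :=
  (E.map (Sym2.lift ⟨fun a b => (if a = v then 1 else 0) + (if b = v then 1 else 0),
    fun _ _ => add_comm _ _⟩)).sum

/-- Cost of a multigraph: multiplicity-weighted sum of (symmetrized) edge costs. -/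
def mcost (c : V → V → ℝ) (E : Multiset (Sym2 V)) : ℝ :=
  (E.map (Sym2.lift ⟨fun a b => (c a b + c b a) / 2, fun _ _ => by ring⟩)).sum

/-- The edge multiset of the closed walk visiting the vertices of `w` in cyclic order.
A singleton list yields one self-loop. -/
def walkEdges (w : List V) : Multiset (Sym2 V) :=
  (((w.zip (w.rotate 1)).map (fun p : V × V => s(p.1, p.2)) : List (Sym2 V)) : Multiset (Sym2 V))

/-- Connectivity of a multigraph on its support. -/
def connOn [DecidableEq V] (E : Multiset (Sym2 V)) : Prop :=
  ∀ u v, 0 < mdeg E u → 0 < mdeg E v →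
    Relation.ReflTransGen (fun a b => s(a, b) ∈ E) u v

/-- Unrestricted MV-mTSP⁺ with arbitrary tours: edge multiset partitions into exactly `m`
non-empty closed walks, visiting each vertex `v` exactly `r v` times in total. -/
def feasP1 [Fintype V] [DecidableEq V] (r : V → ℕ) (m : ℕ) (E : Multiset (Sym2 V)) : Prop :=
  ∃ ws : Fin m → List V, (∀ i, ws i ≠ []) ∧ E = ∑ i, walkEdges (ws i) ∧
    ∀ v, (∑ i, (ws i).count v) = r v

/-- Unrestricted MV-mTSP⁺ with disjoint tours. -/
def feasP2 [Fintype V] [DecidableEq V] (r : V → ℕ) (m : ℕ) (E : Multiset (Sym2 V)) : Prop :=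
  ∃ ws : Fin m → List V, (∀ i, ws i ≠ []) ∧ E = ∑ i, walkEdges (ws i) ∧
    (∀ v, (∑ i, (ws i).count v) = r v) ∧
    ∀ i j, i ≠ j → ∀ v, v ∈ ws i → v ∉ ws j

/-- Unrestricted MV-mTSP₀ with arbitrary tours: at most `m` closed walks. -/
def feasP3 [Fintype V] [DecidableEq V] (r : V → ℕ) (m : ℕ) (E : Multiset (Sym2 V)) : Prop :=
  ∃ k, k ≤ m ∧ ∃ ws : Fin k → List V, (∀ i, ws i ≠ []) ∧ E = ∑ i, walkEdges (ws i) ∧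
    ∀ v, (∑ i, (ws i).count v) = r v

/-- Unrestricted MV-mTSP₀ with disjoint tours. -/
def feasP4 [Fintype V] [DecidableEq V] (r : V → ℕ) (m : ℕ) (E : Multiset (Sym2 V)) : Prop :=
  ∃ k, k ≤ m ∧ ∃ ws : Fin k → List V, (∀ i, ws i ≠ []) ∧ E = ∑ i, walkEdges (ws i) ∧
    (∀ v, (∑ i, (ws i).count v) = r v) ∧
    ∀ i j, i ≠ j → ∀ v, v ∈ ws i → v ∉ ws j

/-- MV-mTSP⁺ with depots and arbitrary tours: exactly `m` tours, each containing exactly one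
depot and at least one city; distinct tours use distinct depots; each city `v` is visited
`r v` times in total. -/
def feasP5 [Fintype V] [DecidableEq V] (D : Finset V) (r : V → ℕ) (m : ℕ)
    (E : Multiset (Sym2 V)) : Prop :=
  ∃ ws : Fin m → List V,
    (∀ i, (∃ d ∈ D, d ∈ ws i) ∧ (∃ v ∈ ws i, v ∉ D) ∧
      (∀ d ∈ D, ∀ d' ∈ D, d ∈ ws i → d' ∈ ws i → d = d')) ∧
    (∀ d ∈ D, ∀ i j, d ∈ ws i → d ∈ ws j → i = j) ∧
    E = ∑ i, walkEdges (ws i) ∧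
    ∀ v, v ∉ D → (∑ i, (ws i).count v) = r v

/-- MV-mTSP⁺ with depots and disjoint tours. -/
def feasP6 [Fintype V] [DecidableEq V] (D : Finset V) (r : V → ℕ) (m : ℕ)
    (E : Multiset (Sym2 V)) : Prop :=
  ∃ ws : Fin m → List V,
    (∀ i, (∃ d ∈ D, d ∈ ws i) ∧ (∃ v ∈ ws i, v ∉ D) ∧
      (∀ d ∈ D, ∀ d' ∈ D, d ∈ ws i → d' ∈ ws i → d = d')) ∧
    (∀ d ∈ D, ∀ i j, d ∈ ws i → d ∈ ws j → i = j) ∧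
    E = ∑ i, walkEdges (ws i) ∧
    (∀ v, v ∉ D → (∑ i, (ws i).count v) = r v) ∧
    ∀ i j, i ≠ j → ∀ v, v ∈ ws i → v ∉ ws j

/-- MV-mTSP₀ with depots and arbitrary tours: at most `m` tours. -/
def feasP7 [Fintype V] [DecidableEq V] (D : Finset V) (r : V → ℕ) (m : ℕ)
    (E : Multiset (Sym2 V)) : Prop :=
  ∃ k, k ≤ m ∧ ∃ ws : Fin k → List V,
    (∀ i, (∃ d ∈ D, d ∈ ws i) ∧ (∃ v ∈ ws i, v ∉ D) ∧
      (∀ d ∈ D, ∀ d' ∈ D, d ∈ ws i → d' ∈ ws i → d = d')) ∧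
    (∀ d ∈ D, ∀ i j, d ∈ ws i → d ∈ ws j → i = j) ∧
    E = ∑ i, walkEdges (ws i) ∧
    ∀ v, v ∉ D → (∑ i, (ws i).count v) = r v

/-- MV-mTSP₀ with depots and disjoint tours. -/
def feasP8 [Fintype V] [DecidableEq V] (D : Finset V) (r : V → ℕ) (m : ℕ)
    (E : Multiset (Sym2 V)) : Prop :=
  ∃ k, k ≤ m ∧ ∃ ws : Fin k → List V,
    (∀ i, (∃ d ∈ D, d ∈ ws i) ∧ (∃ v ∈ ws i, v ∉ D) ∧
      (∀ d ∈ D, ∀ d' ∈ D, d ∈ ws i → d' ∈ ws i → d = d')) ∧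
    (∀ d ∈ D, ∀ i j, d ∈ ws i → d ∈ ws j → i = j) ∧
    E = ∑ i, walkEdges (ws i) ∧
    (∀ v, v ∉ D → (∑ i, (ws i).count v) = r v) ∧
    ∀ i j, i ≠ j → ∀ v, v ∈ ws i → v ∉ ws j

section Helpers

lemma mdeg_zero [DecidableEq V] (v : V) : mdeg (0 : Multiset (Sym2 V)) v = 0 := rfl

lemma mdeg_add [DecidableEq V] (E F : Multiset (Sym2 V)) (v : V) :
    mdeg (E + F) v = mdeg E v + mdeg F v := by
  simp [mdeg]

lemma mcost_zero (c : V → V → ℝ) : mcost c (0 : Multiset (Sym2 V)) = 0 := rfl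

lemma mcost_add (c : V → V → ℝ) (E F : Multiset (Sym2 V)) :
    mcost c (E + F) = mcost c E + mcost c F := by
  simp [mcost]

lemma mcost_singleton (c : V → V → ℝ) (a b : V) :
    mcost c ({s(a, b)} : Multiset (Sym2 V)) = (c a b + c b a) / 2 := by
  simp [mcost]

lemma mcost_cons (c : V → V → ℝ) (a b : V) (E : Multiset (Sym2 V)) :
    mcost c (s(a, b) ::ₘ E) = (c a b + c b a) / 2 + mcost c E := by
  simp [mcost]

lemma mdeg_sum [DecidableEq V] {ι : Type*} (s : Finset ι) (f : ι → Multiset (Sym2 V)) (v : V) :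
    mdeg (∑ i ∈ s, f i) v = ∑ i ∈ s, mdeg (f i) v := by
  classical
  induction s using Finset.cons_induction with
  | empty => simp [mdeg_zero]
  | cons a s ha ih => rw [Finset.sum_cons, Finset.sum_cons, mdeg_add, ih]

lemma mcost_sum {ι : Type*} (c : V → V → ℝ) (s : Finset ι) (f : ι → Multiset (Sym2 V)) :
    mcost c (∑ i ∈ s, f i) = ∑ i ∈ s, mcost c (f i) := by
  classical
  induction s using Finset.cons_induction with
  | empty => simp [mcost_zero]
  | cons a s ha ih => rw [Finset.sum_cons, Finset.sum_cons, mcost_add, ih]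

lemma sum_indicator_eq_count [DecidableEq V] (v : V) (l : List V) :
    (l.map fun a => if a = v then 1 else 0).sum = l.count v := by
  induction l with
  | nil => simp
  | cons a l ih =>
      simp only [List.map_cons, List.sum_cons, ih, List.count_cons]
      by_cases h : a = v <;> simp [h] <;> omega

lemma mdeg_walkEdges [DecidableEq V] (w : List V) (v : V) :
    mdeg (walkEdges w) v = 2 * w.count v := by
  have hlen : w.length ≤ (w.rotate 1).length := by simp
  have hlen' : (w.rotate 1).length ≤ w.length := by simp
  have h1 : (w.zip (w.rotate 1)).map Prod.fst = w := List.map_fst_zip hlen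
  have h2 : (w.zip (w.rotate 1)).map Prod.snd = w.rotate 1 := List.map_snd_zip hlen'
  have key : mdeg (walkEdges w) v
      = ((w.zip (w.rotate 1)).map fun p => (if p.1 = v then 1 else 0)).sum
        + ((w.zip (w.rotate 1)).map fun p => (if p.2 = v then 1 else 0)).sum := by
    simp only [mdeg, walkEdges, Multiset.map_coe, Multiset.sum_coe, List.map_map,
      ← List.sum_map_add]
    rfl
  have e1 : ((w.zip (w.rotate 1)).map fun p => (if p.1 = v then 1 else 0)).sum
      = w.count v := by
    rw [show (fun p : V × V => (if p.1 = v then 1 else 0))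
        = (fun a => if a = v then 1 else 0) ∘ Prod.fst from rfl,
      ← List.map_map, h1, sum_indicator_eq_count]
  have e2 : ((w.zip (w.rotate 1)).map fun p => (if p.2 = v then 1 else 0)).sum
      = w.count v := by
    rw [show (fun p : V × V => (if p.2 = v then 1 else 0))
        = (fun a => if a = v then 1 else 0) ∘ Prod.snd from rfl,
      ← List.map_map, h2, sum_indicator_eq_count, ((w.rotate_perm 1).count_eq v)]
  rw [key, e1, e2]; omega

/- pathEdges -/

def pathEdges : V → List V → Multiset (Sym2 V)
  | _, [] => 0
  | a, b :: l => s(a, b) ::ₘ pathEdges b l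

def lastD : List V → V → V
  | [], d => d
  | b :: l, _ => lastD l b

@[simp] lemma lastD_nil (d : V) : lastD ([] : List V) d = d := rfl
@[simp] lemma lastD_cons (b : V) (l : List V) (d : V) : lastD (b :: l) d = lastD l b := rfl

lemma lastD_append_singleton (l : List V) (z d : V) : lastD (l ++ [z]) d = z := by
  induction l generalizing d with
  | nil => rfl
  | cons b l ih => simpa using ih b

lemma zip_close (a z : V) (l : List V) :
    ((((a :: l).zip (l ++ [z])).map (fun p : V × V => s(p.1, p.2)) : List (Sym2 V)) : Multiset (Sym2 V))
      = pathEdges a l + {s(lastD l a, z)} := by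
  induction l generalizing a with
  | nil => simp [pathEdges]
  | cons b l ih =>
      simp only [List.cons_append, List.zip_cons_cons, List.map_cons, pathEdges, lastD_cons]
      rw [← Multiset.cons_coe, ih b, Multiset.cons_add]

lemma walkEdges_cons (a : V) (l : List V) :
    walkEdges (a :: l) = pathEdges a l + {s(lastD l a, a)} := by
  rw [walkEdges, show (a :: l).rotate 1 = l ++ [a] by
    rw [List.rotate_cons_succ, List.rotate_zero]]
  exact zip_close a a l

lemma pathEdges_append (a z : V) (l : List V) :
    pathEdges a (l ++ [z]) = pathEdges a l + {s(lastD l a, z)} := by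
  induction l generalizing a with
  | nil => simp [pathEdges]
  | cons b l ih =>
      simp only [List.cons_append, List.append_eq, pathEdges, lastD_cons, ih b, Multiset.cons_add]

lemma walkEdges_rotate_one (l : List V) : walkEdges (l.rotate 1) = walkEdges l := by
  cases l with
  | nil => rfl
  | cons a t =>
    rw [List.rotate_cons_succ, List.rotate_zero]
    cases t with
    | nil => rfl
    | cons b t' =>
      rw [List.cons_append, walkEdges_cons, walkEdges_cons, pathEdges_append,
        lastD_append_singleton, lastD_cons]
      simp only [pathEdges, ← Multiset.singleton_add]
      abel

lemma walkEdges_rotate (l : List V) (n : ℕ) : walkEdges (l.rotate n) = walkEdges l := by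
  induction n generalizing l with
  | zero => simp
  | succ k ih =>
      have h := List.rotate_rotate l 1 k
      rw [Nat.add_comm] at h
      rw [← h, ih (l.rotate 1), walkEdges_rotate_one]

lemma mcost_shortcut (c : V → V → ℝ) (hsymm : ∀ u v, c u v = c v u)
    (htri : ∀ u v w, c u w ≤ c u v + c v w) (x h : V) (l : List V) :
    mcost c (walkEdges (h :: l)) ≤ mcost c (walkEdges (x :: h :: l)) := by
  rw [walkEdges_cons, walkEdges_cons, mcost_add, mcost_add, mcost_singleton, mcost_singleton,
    lastD_cons, show pathEdges x (h :: l) = s(x, h) ::ₘ pathEdges h l from rfl, mcost_cons]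
  have t1 := htri (lastD l h) x h
  rw [hsymm h (lastD l h), hsymm x (lastD l h), hsymm h x]
  linarith

lemma reduceWalk (c : V → V → ℝ) (hsymm : ∀ u v, c u v = c v u)
    (htri : ∀ u v w, c u w ≤ c u v + c v w) [DecidableEq V] :
    ∀ (n : ℕ) (w : List V) (d : V), d ∈ w → w.count d ≤ n →
    ∃ w' : List V, w'.count d = 1 ∧ (∀ v, v ≠ d → w'.count v = w.count v) ∧
      (∀ v, v ∈ w' → v ∈ w) ∧ mcost c (walkEdges w') ≤ mcost c (walkEdges w) := by
  intro n
  induction n with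
  | zero =>
      intro w d hd hc
      exact absurd (List.count_pos_iff.mpr hd) (by omega)
  | succ n ih =>
      intro w d hd hc
      by_cases hone : w.count d ≤ 1
      · have : w.count d = 1 := by
          have := List.count_pos_iff.mpr hd; omega
        exact ⟨w, this, fun _ _ => rfl, fun _ h => h, le_rfl⟩
      · obtain ⟨a, b, rfl⟩ := List.append_of_mem hd
        have hlen : a.length ≤ (a ++ d :: b).length := by
          simp [List.length_append]
        have hrt : (a ++ d :: b).rotate a.length = d :: (b ++ a) := by
          rw [List.rotate_eq_drop_append_take hlen, List.drop_left, List.take_left]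
          simp
        have hperm : List.Perm (a ++ d :: b) (d :: (b ++ a)) := by
          rw [← hrt]; exact (List.rotate_perm _ _).symm
        have hcost_eq : walkEdges (d :: (b ++ a)) = walkEdges (a ++ d :: b) := by
          rw [← hrt, walkEdges_rotate]
        have hct : (b ++ a).count d + 1 = (a ++ d :: b).count d := by
          rw [hperm.count_eq]; simp [List.count_cons]
        have hdt : d ∈ b ++ a := by
          rw [← List.count_pos_iff]; omega
        obtain ⟨w', hw1, hw2, hw3, hw4⟩ := ih (b ++ a) d hdt (by omega)
        refine ⟨w', hw1, ?_, ?_, ?_⟩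
        · intro v hv
          rw [hw2 v hv, hperm.count_eq, List.count_cons]
          simp [Ne.symm hv]
        · intro v hv
          have : v ∈ b ++ a := hw3 v hv
          exact hperm.mem_iff.mpr (List.mem_cons_of_mem d this)
        · refine le_trans hw4 (le_trans ?_ (le_of_eq (congrArg (mcost c) hcost_eq)))
          obtain ⟨h', l', heq⟩ : ∃ h' l', b ++ a = h' :: l' := by
            cases hba : b ++ a with
            | nil => rw [hba] at hdt; simp at hdt
            | cons x xs => exact ⟨x, xs, rfl⟩
          rw [heq]
          exact mcost_shortcut c hsymm htri d h' l'
end Helpers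

/-- Any optimal solution of the depot variant can be transformed, without
increasing cost, into an optimal solution in which every depot has degree at most `2`
(i.e., is visited at most once). -/
theorem optimal_solution_visits_depots_once [Fintype V] [DecidableEq V]
    (c : V → V → ℝ) (D : Finset V) (r : V → ℕ) (m : ℕ)
    (hsymm : ∀ u v, c u v = c v u)
    (hnonneg : ∀ u v, 0 ≤ c u v)
    (htri : ∀ u v w, c u w ≤ c u v + c v w)
    (E : Multiset (Sym2 V))
    (hfeas : feasP5 D r m E)
    (hopt : ∀ E', feasP5 D r m E' → mcost c E ≤ mcost c E') :
    ∃ E' : Multiset (Sym2 V),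
      feasP5 D r m E' ∧
      (∀ F, feasP5 D r m F → mcost c E' ≤ mcost c F) ∧
      mcost c E' ≤ mcost c E ∧
      ∀ d ∈ D, mdeg E' d ≤ 2 := by
  classical
  obtain ⟨ws, h1, h2, hE, hr⟩ := hfeas
  choose d hdD hdmem using fun i => (h1 i).1
  choose ws' hc1 hcv hmem hcost using fun i =>
    reduceWalk c hsymm htri ((ws i).count (d i)) (ws i) (d i) (hdmem i) le_rfl
  have hmemd : ∀ i, d i ∈ ws' i := fun i =>
    List.count_pos_iff.mp (by rw [hc1 i]; omega)
  have hcost' : mcost c (∑ i, walkEdges (ws' i)) ≤ mcost c E := by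
    rw [hE, mcost_sum, mcost_sum]
    exact Finset.sum_le_sum fun i _ => hcost i
  have hfeas' : feasP5 D r m (∑ i, walkEdges (ws' i)) := by
    refine ⟨ws', fun i => ⟨⟨d i, hdD i, hmemd i⟩, ?_, ?_⟩, ?_, rfl, ?_⟩
    · obtain ⟨v, hv, hvD⟩ := (h1 i).2.1
      have hvd : v ≠ d i := fun h => hvD (h ▸ hdD i)
      refine ⟨v, ?_, hvD⟩
      rw [← List.count_pos_iff, hcv i v hvd, List.count_pos_iff]
      exact hv
    · intro dd hdd dd' hdd' hm hm'
      exact (h1 i).2.2 dd hdd dd' hdd' (hmem i _ hm) (hmem i _ hm')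
    · intro dd hdd i j hi hj
      exact h2 dd hdd i j (hmem i _ hi) (hmem j _ hj)
    · intro v hv
      rw [← hr v hv]
      exact Finset.sum_congr rfl fun i _ =>
        hcv i v (fun h => hv (h ▸ hdD i))
  refine ⟨∑ i, walkEdges (ws' i), hfeas', fun F hF => le_trans hcost' (hopt F hF), hcost', ?_⟩
  intro dd hdd
  rw [mdeg_sum]
  have hdeg : ∀ i, mdeg (walkEdges (ws' i)) dd = 2 * (ws' i).count dd := fun i =>
    mdeg_walkEdges _ _
  by_cases hex : ∃ i, dd ∈ ws' i
  · obtain ⟨i0, hi0⟩ := hex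
    have hsum : ∑ i, mdeg (walkEdges (ws' i)) dd = mdeg (walkEdges (ws' i0)) dd := by
      refine Finset.sum_eq_single_of_mem i0 (Finset.mem_univ _) ?_
      intro j _ hj
      have hnot : dd ∉ ws' j := fun hmemj =>
        hj (h2 dd hdd j i0 (hmem j _ hmemj) (hmem i0 _ hi0))
      rw [hdeg j, List.count_eq_zero_of_not_mem hnot, Nat.mul_zero]
    have hdd_eq : dd = d i0 :=
      (h1 i0).2.2 dd hdd (d i0) (hdD i0) (hmem i0 _ hi0) (hdmem i0)
    rw [hsum, hdeg i0, hdd_eq, hc1 i0]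
  · push_neg at hex
    have : ∀ i ∈ Finset.univ, mdeg (walkEdges (ws' i)) dd = 0 := fun i _ => by
      rw [hdeg i, List.count_eq_zero_of_not_mem (hex i), Nat.mul_zero]
    rw [Finset.sum_eq_zero this]
    omega
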